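/- arXiv:2409.11339 — 2 statements merged into one kernel-verified Lean document; each statement's English description precedes it below -/
import Mathlib

section
/- Fix r ≥ 0, σ > 0, Δt > 0 and define γ̂* := 2·[ -1 + (Φ((r + σ²/2)√Δt/σ) - e^{-rΔt}·Φ((r - σ²/2)√Δt/σ)) / (1 - e^{-(r + σ²/4)Δt/2}) ]^{-1}. Then γ̂* > 0; equivalently, Φ((r + σ²/2)√Δt/σ) - e^{-rΔt}·Φ((r - σ²/2)√Δt/σ) > 1 - e^{-(r + σ²/4)Δt/2}. -/
open Real

/-- standard normal CDF -/
noncomputable def Phi (x : ℝ) : ℝ := ∫ t in Set.Iic x, Real.exp (-t^2/2) / Real.sqrt (2*π)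

/-!
With `ρ = r√Δt/σ` and `u = σ√Δt/2` the inequality reads
`1 - e^{-ρu-u²/2} < Φ(ρ+u) - e^{-2ρu} Φ(ρ-u)`. Completing the square,
`∫_{z ≤ c} e^{mz} φ(z) dz = e^{m²/2} Φ(c-m)`, so with `c = u - ρ` the difference of the two sides is
`∫_{z > c} (e^{uz-u²-ρu} - e^{-2ρu}) φ(z) dz + ∫_{z ≤ c} (e^{uz-u²-ρu} - e^{2uz-2u²}) φ(z) dz`.
Both exponent comparisons reduce to `u z` versus `u c`, so the first integrand is positive and the
second nonnegative.
-/

open MeasureTheory ProbabilityTheory Set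

lemma Phi_eq_setIntegral_gaussianPDFReal (x : ℝ) :
    Phi x = ∫ t in Iic x, gaussianPDFReal 0 1 t := by
  simp only [Phi, gaussianPDFReal, NNReal.coe_one, mul_one, sub_zero]
  congr 1 with t
  rw [div_eq_inv_mul]

lemma gaussianPDFReal_neg (μ : ℝ) (v : NNReal) (x : ℝ) :
    gaussianPDFReal μ v (-x) = gaussianPDFReal (-μ) v x := by
  simp only [gaussianPDFReal]
  ring_nf

lemma exp_mul_mul_gaussianPDFReal (a m z : ℝ) :
    exp (m * z + a) * gaussianPDFReal 0 1 z = exp (m ^ 2 / 2 + a) * gaussianPDFReal m 1 z := by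
  simp only [gaussianPDFReal, NNReal.coe_one, mul_one, sub_zero]
  rw [mul_left_comm, ← exp_add, mul_left_comm, ← exp_add]
  ring_nf

lemma setIntegral_gaussianPDFReal_Iic (m c : ℝ) :
    ∫ z in Iic c, gaussianPDFReal m 1 z = Phi (c - m) := by
  have h := (measurePreserving_sub_right volume m).setIntegral_preimage_emb
    (measurableEmbedding_subRight m) (gaussianPDFReal 0 1) (Iic (c - m))
  simp only [gaussianPDFReal_sub, zero_add, preimage_sub_const_Iic, sub_add_cancel] at h
  rw [h, Phi_eq_setIntegral_gaussianPDFReal]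

lemma setIntegral_gaussianPDFReal_Ioi (m c : ℝ) :
    ∫ z in Ioi c, gaussianPDFReal m 1 z = Phi (m - c) := by
  rw [← neg_neg c, ← integral_comp_neg_Iic]
  simp only [gaussianPDFReal_neg, setIntegral_gaussianPDFReal_Iic]
  ring_nf

lemma Phi_neg (x : ℝ) : Phi (-x) = 1 - Phi x := by
  have h := integral_add_compl (measurableSet_Iic (a := x)) (integrable_gaussianPDFReal 0 1)
  rw [compl_Iic, setIntegral_gaussianPDFReal_Iic, setIntegral_gaussianPDFReal_Ioi,
    integral_gaussianPDFReal_eq_one 0 one_ne_zero] at h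
  simp only [sub_zero, zero_sub] at h
  linarith

lemma integrable_exp_mul_gaussianPDFReal (a m : ℝ) :
    Integrable fun z => exp (m * z + a) * gaussianPDFReal 0 1 z := by
  simp only [exp_mul_mul_gaussianPDFReal]
  exact (integrable_gaussianPDFReal m 1).const_mul _

lemma setIntegral_exp_mul_gaussianPDFReal_Iic (a m c : ℝ) :
    ∫ z in Iic c, exp (m * z + a) * gaussianPDFReal 0 1 z = exp (m ^ 2 / 2 + a) * Phi (c - m) := by
  simp only [exp_mul_mul_gaussianPDFReal]
  rw [integral_const_mul, setIntegral_gaussianPDFReal_Iic]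

lemma setIntegral_exp_mul_gaussianPDFReal_Ioi (a m c : ℝ) :
    ∫ z in Ioi c, exp (m * z + a) * gaussianPDFReal 0 1 z = exp (m ^ 2 / 2 + a) * Phi (m - c) := by
  simp only [exp_mul_mul_gaussianPDFReal]
  rw [integral_const_mul, setIntegral_gaussianPDFReal_Ioi]

lemma setIntegral_pos_of_pos {α : Type*} [MeasurableSpace α] {μ : Measure α} {s : Set α}
    {f : α → ℝ} (hs : MeasurableSet s) (hμs : μ s ≠ 0) (hf : IntegrableOn f s μ)
    (hpos : ∀ x ∈ s, 0 < f x) : 0 < ∫ x in s, f x ∂μ := by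
  rw [setIntegral_pos_iff_support_of_nonneg_ae _ hf,
    inter_eq_self_of_subset_right (show s ⊆ f.support from fun x hx => (hpos x hx).ne')]
  · exact pos_iff_ne_zero.2 hμs
  · filter_upwards [ae_restrict_mem hs] with x hx using (hpos x hx).le

theorem one_sub_exp_lt_Phi_sub_exp_mul_Phi (ρ : ℝ) {u : ℝ} (hu : 0 < u) :
    1 - exp (-(ρ * u + u ^ 2 / 2)) < Phi (ρ + u) - exp (-(2 * ρ * u)) * Phi (ρ - u) := by
  set φ := gaussianPDFReal 0 1
  have hexp (a m : ℝ) (s : Set ℝ) : IntegrableOn (fun z => exp (m * z + a) * φ z) s :=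
    (integrable_exp_mul_gaussianPDFReal a m).integrableOn
  have hconst (a : ℝ) (s : Set ℝ) : IntegrableOn (fun z => exp a * φ z) s :=
    ((integrable_gaussianPDFReal 0 1).const_mul _).integrableOn
  have hA : 0 < exp (-(ρ * u + u ^ 2 / 2)) * Phi ρ - exp (-(2 * ρ * u)) * Phi (ρ - u) :=
    calc 0 < ∫ z in Ioi (u - ρ),
          (exp (u * z + -(u ^ 2 + ρ * u)) * φ z - exp (-(2 * ρ * u)) * φ z) := by
          refine setIntegral_pos_of_pos measurableSet_Ioi (by simp)
            ((hexp _ _ _).sub (hconst _ _)) fun z hz => ?_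
          have : u * (u - ρ) < u * z := mul_lt_mul_of_pos_left hz hu
          exact sub_pos.2 (mul_lt_mul_of_pos_right (exp_lt_exp.2 (by linarith))
            (gaussianPDFReal_pos _ _ _ one_ne_zero))
      _ = _ := by
          rw [integral_sub (hexp _ _ _) (hconst _ _), integral_const_mul,
            setIntegral_exp_mul_gaussianPDFReal_Ioi, setIntegral_gaussianPDFReal_Ioi]
          ring_nf
  have hB : 0 ≤ exp (-(ρ * u + u ^ 2 / 2)) * (1 - Phi ρ) - (1 - Phi (ρ + u)) :=
    calc 0 ≤ ∫ z in Iic (u - ρ),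
          (exp (u * z + -(u ^ 2 + ρ * u)) * φ z - exp (2 * u * z + -2 * u ^ 2) * φ z) := by
          refine setIntegral_nonneg measurableSet_Iic fun z hz => ?_
          have : u * z ≤ u * (u - ρ) := mul_le_mul_of_nonneg_left hz hu.le
          exact sub_nonneg.2 (mul_le_mul_of_nonneg_right (exp_le_exp.2 (by linarith))
            (gaussianPDFReal_nonneg _ _ _))
      _ = _ := by
          rw [integral_sub (hexp _ _ _) (hexp _ _ _), setIntegral_exp_mul_gaussianPDFReal_Iic,
            setIntegral_exp_mul_gaussianPDFReal_Iic, ← Phi_neg, ← Phi_neg]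
          ring_nf
          rw [exp_zero, one_mul]
  linarith

theorem stmt4 (r σ Δt : ℝ) (hr : 0 ≤ r) (hσ : 0 < σ) (hΔt : 0 < Δt) :
    Phi ((r + σ^2/2) * Real.sqrt Δt / σ)
        - Real.exp (-(r*Δt)) * Phi ((r - σ^2/2) * Real.sqrt Δt / σ)
      > 1 - Real.exp (-(r + σ^2/4)*Δt/2) ∧
    0 < 2 * (-1 +
        (Phi ((r + σ^2/2) * Real.sqrt Δt / σ)
          - Real.exp (-(r*Δt)) * Phi ((r - σ^2/2) * Real.sqrt Δt / σ)) /
        (1 - Real.exp (-(r + σ^2/4)*Δt/2)))⁻¹ := by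
  have hsq : √Δt ^ 2 = Δt := sq_sqrt hΔt.le
  have key := one_sub_exp_lt_Phi_sub_exp_mul_Phi (r * √Δt / σ)
    (u := σ * √Δt / 2) (by positivity)
  rw [show r * √Δt / σ + σ * √Δt / 2 = (r + σ ^ 2 / 2) * √Δt / σ by field_simp,
    show r * √Δt / σ - σ * √Δt / 2 = (r - σ ^ 2 / 2) * √Δt / σ by field_simp,
    show -(2 * (r * √Δt / σ) * (σ * √Δt / 2)) = -(r * Δt) by field_simp; rw [hsq],
    show -(r * √Δt / σ * (σ * √Δt / 2) + (σ * √Δt / 2) ^ 2 / 2) = -(r + σ ^ 2 / 4) * Δt / 2 by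
      field_simp; rw [hsq]; ring] at key
  have hD : 0 < 1 - exp (-(r + σ ^ 2 / 4) * Δt / 2) := by
    have : 0 < (r + σ ^ 2 / 4) * Δt := by positivity
    exact sub_pos.2 (exp_lt_one_iff.2 (by linarith))
  exact ⟨key, mul_pos two_pos (inv_pos.2 (by linarith [(one_lt_div hD).2 key]))⟩
end

section
/- For r = 0, Δt > 0, γ̂ > 0, define G(σ) := (2+γ̂)[1 - e^{-σ²Δt/8}] - γ̂[2Φ(σ√Δt/2) - 1] on (0,∞). Then there exists a unique σ* > 0 with G(σ*) = 0. Moreover σ* > σ̄ := (γ̂/(2+γ̂))·√(8/(πΔt)), G(σ) < 0 for σ ∈ (0, σ*), and G(σ) > 0 for σ > σ*. -/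
/-!
Writing `E σ = exp (-σ²Δt/8)`, the derivative of `G` is `E σ · (2+γ)Δt/4 · (σ - σ̄)`, so `G`
decreases on `[0, σ̄]` and increases on `[σ̄, ∞)`. Since `Φ 0 = 1/2` gives `G 0 = 0`, `G` is
negative on `(0, σ̄]`; since `Φ ≤ 1` gives `G σ ≥ 2 - (2+γ) E σ → 2`, `G` eventually becomes
positive. The intermediate value theorem on `[σ̄, ∞)` then yields the unique positive zero.
-/

open Real

open MeasureTheory Set Filter Topology ProbabilityTheory

lemma gaussianPDFReal_zero_one :
    gaussianPDFReal 0 1 = fun t => exp (-t ^ 2 / 2) / √(2 * π) := by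
  ext t
  simp [gaussianPDFReal_def, div_eq_inv_mul]

lemma integrable_stdNormal : Integrable fun t : ℝ => exp (-t ^ 2 / 2) / √(2 * π) := by
  simpa only [gaussianPDFReal_zero_one] using integrable_gaussianPDFReal 0 1

lemma integral_stdNormal : ∫ t : ℝ, exp (-t ^ 2 / 2) / √(2 * π) = 1 := by
  simpa only [gaussianPDFReal_zero_one] using integral_gaussianPDFReal_eq_one 0 one_ne_zero

lemma Phi_le_one (x : ℝ) : Phi x ≤ 1 :=
  integral_stdNormal ▸ setIntegral_le_integral integrable_stdNormal
    (.of_forall fun _ => by positivity)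

lemma Phi_add_Phi_neg (x : ℝ) : Phi x + Phi (-x) = 1 := by
  have hneg : Phi (-x) = ∫ t in Ioi x, exp (-t ^ 2 / 2) / √(2 * π) := by
    rw [Phi, ← integral_comp_neg_Ioi]
    simp only [neg_sq]
  rw [hneg, Phi, intervalIntegral.integral_Iic_add_Ioi integrable_stdNormal.integrableOn
    integrable_stdNormal.integrableOn, integral_stdNormal]

lemma Phi_zero : Phi 0 = 1 / 2 := by
  linarith [neg_zero (G := ℝ) ▸ Phi_add_Phi_neg 0]

lemma hasDerivAt_Phi (x : ℝ) : HasDerivAt Phi (exp (-x ^ 2 / 2) / √(2 * π)) x := by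
  have hPhi : Phi = fun y => Phi 0 + ∫ t in (0 : ℝ)..y, exp (-t ^ 2 / 2) / √(2 * π) := by
    funext y
    rw [← intervalIntegral.integral_Iic_sub_Iic integrable_stdNormal.integrableOn
      integrable_stdNormal.integrableOn, Phi, Phi]
    ring
  have hcont : Continuous fun t : ℝ => exp (-t ^ 2 / 2) / √(2 * π) := by fun_prop
  rw [hPhi]
  exact (intervalIntegral.integral_hasDerivAt_right integrable_stdNormal.intervalIntegrable
    (hcont.stronglyMeasurableAtFilter _ _) hcont.continuousAt).const_add _

lemma exists_root_of_hasDerivAt_neg_then_pos {f f' : ℝ → ℝ} {a b : ℝ}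
    (hf : ∀ x, HasDerivAt f (f' x) x) (hf'_neg : ∀ x, 0 < x → x < a → f' x < 0)
    (hf'_pos : ∀ x, a < x → 0 < f' x) (hf0 : f 0 = 0) (ha : 0 < a) (hab : a ≤ b)
    (hfb : 0 < f b) :
    ∃ s, a < s ∧ f s = 0 ∧ (∀ x, 0 < x → x < s → f x < 0) ∧ (∀ x, s < x → 0 < f x) := by
  have hcont : Continuous f := continuous_iff_continuousAt.2 fun x => (hf x).continuousAt
  have hanti : StrictAntiOn f (Icc 0 a) :=
    strictAntiOn_of_hasDerivWithinAt_neg (convex_Icc 0 a) hcont.continuousOn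
      (fun x _ => (hf x).hasDerivWithinAt) fun x hx => by
        rw [interior_Icc] at hx
        exact hf'_neg x hx.1 hx.2
  have hmono : StrictMonoOn f (Ici a) :=
    strictMonoOn_of_hasDerivWithinAt_pos (convex_Ici a) hcont.continuousOn
      (fun x _ => (hf x).hasDerivWithinAt) fun x hx => hf'_pos x (by rwa [interior_Ici] at hx)
  have hneg_Ioc : ∀ x ∈ Ioc 0 a, f x < 0 := fun x hx =>
    hf0 ▸ hanti (left_mem_Icc.2 ha.le) (Ioc_subset_Icc_self hx) hx.1
  obtain ⟨s, ⟨has, -⟩, hs⟩ := intermediate_value_Ioo hab hcont.continuousOn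
    ⟨hneg_Ioc a ⟨ha, le_rfl⟩, hfb⟩
  refine ⟨s, has, hs, fun x hx hxs => ?_, fun x hsx => ?_⟩
  · rcases le_or_gt x a with hxa | hax
    · exact hneg_Ioc x ⟨hx, hxa⟩
    · exact hs ▸ hmono hax.le has.le hxs
  · exact hs ▸ hmono has.le (has.trans hsx).le hsx

-- `volGap Δt γ` and `critVol Δt γ` are the `G` and `σ̄` of the statement.
noncomputable def volGap (Δt γ σ : ℝ) : ℝ :=
  (2 + γ) * (1 - exp (-σ ^ 2 * Δt / 8)) - γ * (2 * Phi (σ * √Δt / 2) - 1)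

noncomputable def critVol (Δt γ : ℝ) : ℝ := γ / (2 + γ) * √(8 / (π * Δt))

lemma critVol_pos {Δt γ : ℝ} (hΔt : 0 < Δt) (hγ : 0 < γ) : 0 < critVol Δt γ := by
  unfold critVol; positivity

lemma mul_critVol {Δt γ : ℝ} (hΔt : 0 < Δt) (hγ : 2 + γ ≠ 0) :
    (2 + γ) * critVol Δt γ * Δt / 4 = γ * √Δt / √(2 * π) := by
  have hsqrt : √(8 / (π * Δt)) * (Δt / 4) = √Δt / √(2 * π) := by
    rw [← sqrt_div hΔt.le, ← abs_of_pos (by positivity : 0 < Δt / 4), ← sqrt_sq_eq_abs,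
      ← sqrt_mul (by positivity)]
    congr 1
    field_simp
    ring
  rw [critVol, mul_div_assoc, mul_div_assoc, ← hsqrt]
  field_simp

lemma hasDerivAt_volGap {Δt γ : ℝ} (hΔt : 0 < Δt) (hγ : 2 + γ ≠ 0) (σ : ℝ) :
    HasDerivAt (volGap Δt γ)
      (exp (-σ ^ 2 * Δt / 8) * ((2 + γ) * Δt / 4 * (σ - critVol Δt γ))) σ := by
  have hexp : HasDerivAt (fun y => exp (-y ^ 2 * Δt / 8))
      (exp (-σ ^ 2 * Δt / 8) * (-(2 * σ) * Δt / 8)) σ := by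
    simpa using (((hasDerivAt_pow 2 σ).neg.mul_const Δt).div_const 8).exp
  have hPhi : HasDerivAt (fun y => Phi (y * √Δt / 2))
      (exp (-(σ * √Δt / 2) ^ 2 / 2) / √(2 * π) * (√Δt / 2)) σ :=
    (hasDerivAt_Phi _).comp σ (((hasDerivAt_id σ).mul_const _).div_const 2 |>.congr_deriv
      (by simp))
  have hsq : -(σ * √Δt / 2) ^ 2 / 2 = -σ ^ 2 * Δt / 8 := by
    rw [div_pow, mul_pow, sq_sqrt hΔt.le]; ring
  have h := ((hexp.const_sub 1).const_mul (2 + γ)).sub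
    (((hPhi.const_mul 2).sub_const 1).const_mul γ)
  rw [hsq] at h
  refine h.congr_deriv ?_
  linear_combination exp (-σ ^ 2 * Δt / 8) * mul_critVol hΔt hγ

lemma two_sub_le_volGap {Δt γ : ℝ} (hγ : 0 ≤ γ) (σ : ℝ) :
    2 - (2 + γ) * exp (-σ ^ 2 * Δt / 8) ≤ volGap Δt γ σ := by
  have := Phi_le_one (σ * √Δt / 2)
  rw [volGap]
  nlinarith

lemma exists_volGap_pos {Δt γ : ℝ} (hΔt : 0 < Δt) (hγ : 0 ≤ γ) (a : ℝ) :
    ∃ b, a ≤ b ∧ 0 < volGap Δt γ b := by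
  have hlim : Tendsto (fun σ => 2 - (2 + γ) * exp (-σ ^ 2 * Δt / 8)) atTop (𝓝 2) := by
    have : Tendsto (fun σ : ℝ => -σ ^ 2 * Δt / 8) atTop atBot := by
      simp_rw [neg_mul, neg_div]
      exact tendsto_neg_atTop_atBot.comp
        (((tendsto_pow_atTop two_ne_zero).atTop_mul_const hΔt).atTop_div_const (by norm_num))
    simpa using ((tendsto_exp_atBot.comp this).const_mul (2 + γ)).const_sub 2
  obtain ⟨b, hab, hb⟩ :=
    ((eventually_ge_atTop a).and (hlim.eventually (lt_mem_nhds two_pos))).exists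
  exact ⟨b, hab, hb.trans_le (two_sub_le_volGap hγ b)⟩

theorem stmt11 (Δt γ : ℝ) (hΔt : 0 < Δt) (hγ : 0 < γ)
    (G : ℝ → ℝ)
    (hG : ∀ σ : ℝ, G σ = (2+γ) * (1 - Real.exp (-σ^2*Δt/8))
        - γ * (2 * Phi (σ * Real.sqrt Δt / 2) - 1)) :
    ∃ σs : ℝ, 0 < σs ∧ G σs = 0 ∧
      (γ/(2+γ)) * Real.sqrt (8/(π*Δt)) < σs ∧
      (∀ σ : ℝ, 0 < σ → σ < σs → G σ < 0) ∧
      (∀ σ : ℝ, σs < σ → 0 < G σ) ∧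
      (∀ σ : ℝ, 0 < σ → G σ = 0 → σ = σs) := by
  obtain rfl : G = volGap Δt γ := funext hG
  have h2γ : 0 < 2 + γ := by linarith
  have hE : ∀ σ, 0 < exp (-σ ^ 2 * Δt / 8) * ((2 + γ) * Δt / 4) := fun σ => by positivity
  obtain ⟨b, hab, hb⟩ := exists_volGap_pos hΔt hγ.le (critVol Δt γ)
  obtain ⟨s, hs, hs0, hneg, hpos⟩ := exists_root_of_hasDerivAt_neg_then_pos
    (hasDerivAt_volGap hΔt h2γ.ne')
    (fun σ _ hσ => by rw [← mul_assoc]; exact mul_neg_of_pos_of_neg (hE σ) (sub_neg.2 hσ))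
    (fun σ hσ => by rw [← mul_assoc]; exact mul_pos (hE σ) (sub_pos.2 hσ))
    (by simp [volGap, Phi_zero]) (critVol_pos hΔt hγ) hab hb
  refine ⟨s, (critVol_pos hΔt hγ).trans hs, hs0, hs, hneg, hpos, fun σ hσ hσ0 => ?_⟩
  rcases lt_trichotomy σ s with h | h | h
  · exact absurd hσ0 (hneg σ hσ h).ne
  · exact h
  · exact absurd hσ0 (hpos σ h).ne'
end
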